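/- The map q ↦ (α_i), where (α_i) denotes the quasi-greedy expansion of 1 in base q with unbounded digits, is a strictly increasing one-to-one correspondence between the interval (1, ∞) and the set of sequences (α_i) of nonnegative integers having infinitely many nonzero terms and satisfying α_{n+1}α_{n+2}... ≤ α_1α_2... (lexicographically) for all n ≥ 1. -/

import Mathlib

/-- Strict lexicographic order on digit sequences (indexed from 0). -/
def LexLt (a b : ℕ → ℕ) : Prop :=
  ∃ n, (∀ k, k < n → a k = b k) ∧ a n < b n

/-- Non-strict lexicographic order on digit sequences. -/
def LexLe (a b : ℕ → ℕ) : Prop :=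
  LexLt a b ∨ a = b

/-- The next quasi-greedy digit with unbounded digits: the largest nonnegative integer `m`
with `s + m / q ^ (n+1) < x`, where `s` is the value of the previously chosen digits. -/
noncomputable def qgDigitU (q x s : ℝ) (n : ℕ) : ℕ :=
  sSup {m : ℕ | s + (m : ℝ) / q ^ (n + 1) < x}

/-- Partial sums of the quasi-greedy expansion of `x` in base `q` with unbounded digits. -/
noncomputable def qgSumU (q x : ℝ) : ℕ → ℝ
  | 0 => 0
  | n + 1 => qgSumU q x n + (qgDigitU q x (qgSumU q x n) n : ℝ) / q ^ (n + 1)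

/-- `quasiGreedyU q x n` is the `(n+1)`-st digit (indexing from 0) of the quasi-greedy
expansion of `x` in base `q` with unbounded digits: recursively, it is the largest
nonnegative integer `a_n` with `a_1/q + ⋯ + a_n/q^n < x`. -/
noncomputable def quasiGreedyU (q x : ℝ) (n : ℕ) : ℕ :=
  qgDigitU q x (qgSumU q x n) n

/-!
The quasi-greedy digits of `x` are characterised by their remainders
`r n = q ^ n * (x - ∑ i < n, a i / q ^ (i + 1))`: these must lie in `(0, 1]` for `n ≥ 1`.
Comparing at the first differing digit, the quasi-greedy expansion is therefore the
lexicographically largest infinite expansion of any number `≤ x`. Monotonicity follows because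
the expansion of `1` in base `q` represents a number `< 1` in every larger base, and the shift
condition because each tail of the expansion is an infinite expansion of some `r n ≤ 1`.

Conversely, the shift condition bounds all digits by the first one, so by the intermediate value
theorem the sequence expands `1` in some base `q > 1`. If `V ≥ 1` bounds its remainders, the
shift condition improves this bound to `1 + (V - 1) / q`; hence all remainders are `≤ 1`, and
the sequence is the quasi-greedy expansion of `1`.
-/

open Filter Topology Finset

lemma lexLe_iff_not_lexLt {a b : ℕ → ℕ} : LexLe a b ↔ ¬ LexLt b a := by
  change toLex a < toLex b ∨ a = b ↔ ¬ toLex b < toLex a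
  exact (or_congr_right toLex_inj.symm).trans (le_iff_lt_or_eq.symm.trans not_lt.symm)

lemma infinite_setOf_add_ne_zero {a : ℕ → ℕ} (h : {n | a n ≠ 0}.Infinite) (k : ℕ) :
    {i | a (k + i) ≠ 0}.Infinite :=
  Set.infinite_of_forall_exists_gt fun m => by
    obtain ⟨j, hj, hkj⟩ := h.exists_gt (k + m)
    exact ⟨j - k, by simpa [Nat.add_sub_cancel' (by omega : k ≤ j)] using hj, by omega⟩

lemma sum_range_lt_iff_infinite_support {f : ℕ → ℝ} {x : ℝ} (hf : ∀ i, 0 ≤ f i)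
    (h : HasSum f x) : (∀ n, ∑ i ∈ range n, f i < x) ↔ (Function.support f).Infinite := by
  constructor
  · intro hlt hfin
    obtain ⟨N, hN⟩ := hfin.bddAbove
    have hx : x = ∑ i ∈ range (N + 1), f i :=
      h.unique <| hasSum_sum_of_ne_finset_zero fun i hi => by
        by_contra hfi
        exact hi (mem_range.2 (Nat.lt_succ_of_le (hN hfi)))
    exact (hlt (N + 1)).ne hx.symm
  · intro hinf n
    obtain ⟨j, hj, hnj⟩ := hinf.exists_gt n
    calc ∑ i ∈ range n, f i < ∑ i ∈ range (j + 1), f i :=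
          sum_lt_sum_of_subset (range_subset_range.2 (by omega)) (mem_range.2 (by omega))
            (by simp; omega) ((hf j).lt_of_ne' hj) fun i _ _ => hf i
      _ ≤ x := sum_le_hasSum _ (fun i _ => hf i) h

lemma le_one_of_le_one_add_sub_div {t : ℕ → ℝ} {q : ℝ} (hq : 1 < q)
    (hbdd : BddAbove (Set.range t))
    (hstep : ∀ V, 1 ≤ V → (∀ m, t m ≤ V) → ∀ m, t m ≤ 1 + (V - 1) / q) (m : ℕ) : t m ≤ 1 := by
  set V := max (sSup (Set.range t)) 1
  have hV : ∀ m, t m ≤ V := fun m => (le_csSup hbdd ⟨m, rfl⟩).trans (le_max_left _ _)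
  have hV1 : 0 ≤ V - 1 := sub_nonneg.2 (le_max_right _ _)
  have hVle : V ≤ 1 + (V - 1) / q :=
    max_le (csSup_le (Set.range_nonempty t) (by
      rintro _ ⟨m, rfl⟩
      exact hstep V (le_max_right _ _) hV m)) (by linarith [div_nonneg hV1 (one_pos.trans hq).le])
  have : V ≤ 1 := by
    by_contra! h
    linarith [div_lt_self (sub_pos.2 h) hq]
  exact (hV m).trans this

lemma hasSum_div_pow_succ {q : ℝ} (hq : 1 < q) (C : ℝ) :
    HasSum (fun i => C / q ^ (i + 1)) (C / (q - 1)) := by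
  have hq0 : 0 < q := one_pos.trans hq
  have hq1 : q - 1 ≠ 0 := sub_ne_zero.2 hq.ne'
  have h := (hasSum_geometric_of_lt_one (inv_nonneg.2 hq0.le)
    (inv_lt_one_of_one_lt₀ hq)).mul_left (C / q)
  rw [show C / q * (1 - q⁻¹)⁻¹ = C / (q - 1) by field_simp] at h
  exact h.congr_fun fun i => by rw [pow_succ, inv_pow]; field_simp

section Remainder

variable {q x : ℝ} {a : ℕ → ℕ}

lemma sum_range_lt_iff_infinite (hq : 0 < q) (h : HasSum (fun i => (a i : ℝ) / q ^ (i + 1)) x) :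
    (∀ n, ∑ i ∈ range n, (a i : ℝ) / q ^ (i + 1) < x) ↔ {n | a n ≠ 0}.Infinite := by
  rw [sum_range_lt_iff_infinite_support (fun i => by positivity) h]
  congr!
  ext i
  simp [hq.ne']

noncomputable def remainder (q x : ℝ) (a : ℕ → ℕ) (n : ℕ) : ℝ :=
  q ^ n * (x - ∑ i ∈ range n, (a i : ℝ) / q ^ (i + 1))

lemma remainder_zero : remainder q x a 0 = x := by
  simp [remainder]

lemma remainder_succ (hq : q ≠ 0) (n : ℕ) :
    remainder q x a (n + 1) = q * remainder q x a n - a n := by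
  simp only [remainder, sum_range_succ]
  field_simp
  ring

lemma remainder_eq_sum_add (hq : q ≠ 0) (m k : ℕ) :
    remainder q x a m =
      ∑ j ∈ range k, (a (m + j) : ℝ) / q ^ (j + 1) + remainder q x a (m + k) / q ^ k := by
  induction k with
  | zero => simp
  | succ k ih =>
    rw [ih, sum_range_succ, ← add_assoc, remainder_succ hq]
    field_simp
    ring

lemma hasSum_remainder (hq : q ≠ 0) (h : HasSum (fun i => (a i : ℝ) / q ^ (i + 1)) x)
    (n : ℕ) : HasSum (fun i => (a (n + i) : ℝ) / q ^ (i + 1)) (remainder q x a n) := by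
  refine (((hasSum_nat_add_iff' n).2 h).mul_left (q ^ n)).congr_fun fun i => ?_
  rw [add_comm n i]
  field_simp
  ring

lemma remainder_pos (hq : 0 < q) (h : HasSum (fun i => (a i : ℝ) / q ^ (i + 1)) x)
    (hinf : {n | a n ≠ 0}.Infinite) (n : ℕ) : 0 < remainder q x a n :=
  mul_pos (pow_pos hq n) (sub_pos.2 ((sum_range_lt_iff_infinite hq h).2 hinf n))

lemma remainder_succ_mem_Ioc_iff (hq : 0 < q) (n : ℕ) :
    remainder q x a (n + 1) ∈ Set.Ioc 0 1 ↔
      (∑ i ∈ range n, (a i : ℝ) / q ^ (i + 1)) + a n / q ^ (n + 1) < x ∧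
        x ≤ (∑ i ∈ range n, (a i : ℝ) / q ^ (i + 1)) + (a n + 1) / q ^ (n + 1) := by
  have hQ : 0 < q ^ (n + 1) := pow_pos hq _
  rw [remainder, sum_range_succ, Set.mem_Ioc, mul_pos_iff_of_pos_left hQ, ← le_div_iff₀' hQ,
    add_div, sub_pos, sub_le_iff_le_add]
  exact and_congr_right' <| by rw [add_comm (1 / _), add_assoc]

lemma hasSum_of_remainder_le (hq : 1 < q) {B : ℝ} (h0 : ∀ n, 0 ≤ remainder q x a n)
    (hB : ∀ n, remainder q x a n ≤ B) : HasSum (fun i => (a i : ℝ) / q ^ (i + 1)) x := by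
  have hq0 : 0 < q := one_pos.trans hq
  rw [hasSum_iff_tendsto_nat_of_nonneg fun i => by positivity]
  have hpartial : ∀ n,
      ∑ i ∈ range n, (a i : ℝ) / q ^ (i + 1) = x - remainder q x a n / q ^ n := by
    intro n
    rw [remainder, mul_div_cancel_left₀ _ (pow_pos hq0 n).ne']
    ring
  have hlim : Tendsto (fun n => x - B / q ^ n) atTop (𝓝 x) := by
    simpa using tendsto_const_nhds.sub
      (tendsto_const_nhds.div_atTop (tendsto_pow_atTop_atTop_of_one_lt hq))
  refine tendsto_of_tendsto_of_tendsto_of_le_of_le hlim tendsto_const_nhds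
    (fun n => ?_) fun n => ?_
  · rw [hpartial]
    gcongr
    exact hB n
  · rw [hpartial]
    linarith [div_nonneg (h0 n) (pow_pos hq0 n).le]

end Remainder

section QuasiGreedy

variable {q x s : ℝ} {n m : ℕ}

lemma qgDigitU_eq_of (hq : 0 < q) (hlt : s + m / q ^ (n + 1) < x)
    (hle : x ≤ s + (m + 1) / q ^ (n + 1)) : qgDigitU q x s n = m := by
  refine IsGreatest.csSup_eq ⟨hlt, fun m' (hm' : s + (m' : ℝ) / q ^ (n + 1) < x) => ?_⟩
  have : (m' : ℝ) / q ^ (n + 1) < (m + 1) / q ^ (n + 1) := by linarith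
  rw [div_lt_div_iff_of_pos_right (pow_pos hq _)] at this
  exact Nat.lt_succ_iff.mp (by exact_mod_cast this)

lemma qgDigitU_spec (hq : 0 < q) (hs : s < x) :
    s + qgDigitU q x s n / q ^ (n + 1) < x ∧ x ≤ s + (qgDigitU q x s n + 1) / q ^ (n + 1) := by
  have hQ : 0 < q ^ (n + 1) := pow_pos hq _
  set y := (x - s) * q ^ (n + 1)
  have hy : 0 < y := mul_pos (sub_pos.2 hs) hQ
  -- the digit is `⌈y⌉₊ - 1`, the largest natural number below `y`
  have hm : ((⌈y⌉₊ - 1 : ℕ) : ℝ) = ⌈y⌉₊ - 1 := by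
    rw [Nat.cast_sub (Nat.one_le_iff_ne_zero.2 (Nat.ceil_pos.2 hy).ne'), Nat.cast_one]
  have hlt : s + ((⌈y⌉₊ - 1 : ℕ) : ℝ) / q ^ (n + 1) < x := by
    rw [← lt_sub_iff_add_lt', div_lt_iff₀ hQ, hm]
    linarith [Nat.ceil_lt_add_one hy.le]
  have hle : x ≤ s + (((⌈y⌉₊ - 1 : ℕ) : ℝ) + 1) / q ^ (n + 1) := by
    rw [← sub_le_iff_le_add', le_div_iff₀ hQ, hm, sub_add_cancel]
    exact Nat.le_ceil y
  rw [qgDigitU_eq_of hq hlt hle]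
  exact ⟨hlt, hle⟩

lemma qgSumU_eq_sum (q x : ℝ) (n : ℕ) :
    qgSumU q x n = ∑ i ∈ range n, (quasiGreedyU q x i : ℝ) / q ^ (i + 1) := by
  induction n with
  | zero => rfl
  | succ n ih => rw [sum_range_succ, ← ih]; rfl

lemma qgSumU_lt (hq : 0 < q) (hx : 0 < x) (n : ℕ) : qgSumU q x n < x := by
  induction n with
  | zero => exact hx
  | succ n ih => exact (qgDigitU_spec hq ih).1

theorem quasiGreedyU_eq_iff (hq : 0 < q) (hx : 0 < x) {a : ℕ → ℕ} :
    quasiGreedyU q x = a ↔ ∀ n, remainder q x a (n + 1) ∈ Set.Ioc 0 1 := by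
  simp_rw [remainder_succ_mem_Ioc_iff hq]
  constructor
  · rintro rfl n
    rw [← qgSumU_eq_sum]
    exact qgDigitU_spec hq (qgSumU_lt hq hx n)
  · intro h
    have hsum : ∀ n, qgSumU q x n = ∑ i ∈ range n, (a i : ℝ) / q ^ (i + 1) := by
      intro n
      induction n with
      | zero => rfl
      | succ n ih => rw [qgSumU, ih, qgDigitU_eq_of hq (h n).1 (h n).2, sum_range_succ]
    funext n
    rw [quasiGreedyU, hsum, qgDigitU_eq_of hq (h n).1 (h n).2]

lemma quasiGreedyU_remainder_mem (hq : 0 < q) (hx : 0 < x) (n : ℕ) :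
    remainder q x (quasiGreedyU q x) (n + 1) ∈ Set.Ioc 0 1 :=
  (quasiGreedyU_eq_iff hq hx).1 rfl n

theorem quasiGreedyU_hasSum (hq : 1 < q) (hx : 0 < x) :
    HasSum (fun i => (quasiGreedyU q x i : ℝ) / q ^ (i + 1)) x := by
  have hmem := quasiGreedyU_remainder_mem (one_pos.trans hq) hx
  refine hasSum_of_remainder_le hq (B := max x 1) (fun n => ?_) fun n => ?_
  · cases n with
    | zero => rw [remainder_zero]; exact hx.le
    | succ n => exact (hmem n).1.le
  · cases n with
    | zero => rw [remainder_zero]; exact le_max_left _ _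
    | succ n => exact (hmem n).2.trans (le_max_right _ _)

theorem quasiGreedyU_infinite (hq : 1 < q) (hx : 0 < x) :
    {n | quasiGreedyU q x n ≠ 0}.Infinite := by
  have hq0 : 0 < q := one_pos.trans hq
  refine (sum_range_lt_iff_infinite hq0 (quasiGreedyU_hasSum hq hx)).1 fun n => ?_
  rw [← qgSumU_eq_sum]
  exact qgSumU_lt hq0 hx n

end QuasiGreedy

section Lex

variable {q x : ℝ}

theorem lexLe_quasiGreedyU_of_hasSum (hq : 0 < q) (hx : 0 < x) {b : ℕ → ℕ} {c : ℝ}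
    (hb : {n | b n ≠ 0}.Infinite) (hsum : HasSum (fun i => (b i : ℝ) / q ^ (i + 1)) c)
    (hc : c ≤ x) : LexLe b (quasiGreedyU q x) := by
  rw [lexLe_iff_not_lexLt]
  rintro ⟨n, hagree, hlt⟩
  have hprefix : ∑ i ∈ range n, (b i : ℝ) / q ^ (i + 1) = qgSumU q x n := by
    rw [qgSumU_eq_sum]
    exact sum_congr rfl fun i hi => by rw [hagree i (mem_range.1 hi)]
  have hdigit : ((quasiGreedyU q x n : ℝ) + 1) / q ^ (n + 1) ≤ b n / q ^ (n + 1) := by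
    gcongr
    exact_mod_cast hlt
  have hspec : x ≤ qgSumU q x n + ((quasiGreedyU q x n : ℝ) + 1) / q ^ (n + 1) :=
    (qgDigitU_spec hq (qgSumU_lt hq hx n)).2
  have hpartial := (sum_range_lt_iff_infinite hq hsum).2 hb (n + 1)
  rw [sum_range_succ, hprefix] at hpartial
  linarith

theorem quasiGreedyU_strictMonoOn (hx : 0 < x) :
    StrictMonoOn (fun q => toLex (quasiGreedyU q x)) (Set.Ioi 1) := by
  intro q (hq : 1 < q) q' (hq' : 1 < q') hqq'
  set a := quasiGreedyU q x
  have hsum := quasiGreedyU_hasSum hq hx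
  have hle : ∀ i, (a i : ℝ) / q' ^ (i + 1) ≤ a i / q ^ (i + 1) := fun i => by
    gcongr
  obtain ⟨j, hj⟩ := (quasiGreedyU_infinite hq hx).nonempty
  have hlt : (a j : ℝ) / q' ^ (j + 1) < a j / q ^ (j + 1) := by
    have : (0 : ℝ) < a j := by exact_mod_cast Nat.pos_of_ne_zero hj
    gcongr
  have hsum' : Summable fun i => (a i : ℝ) / q' ^ (i + 1) :=
    hsum.summable.of_nonneg_of_le (fun i => by positivity) hle
  have hval : ∑' i, (a i : ℝ) / q' ^ (i + 1) < x :=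
    hsum.tsum_eq ▸ hsum'.tsum_lt_tsum hle hlt hsum.summable
  refine lt_of_le_of_ne ?_ fun heq => hval.ne ?_
  · refine not_lt.1 <| lexLe_iff_not_lexLt.1 ?_
    exact lexLe_quasiGreedyU_of_hasSum (one_pos.trans hq') hx (quasiGreedyU_infinite hq hx)
      hsum'.hasSum hval.le
  · rw [show a = quasiGreedyU q' x from toLex_inj.1 heq]
    exact (quasiGreedyU_hasSum hq' hx).tsum_eq

theorem lexLe_quasiGreedyU_shift (hq : 1 < q) (hx : 0 < x) (n : ℕ) :
    LexLe (fun i => quasiGreedyU q x (n + 1 + i)) (quasiGreedyU q 1) :=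
  lexLe_quasiGreedyU_of_hasSum (one_pos.trans hq) one_pos
    (infinite_setOf_add_ne_zero (quasiGreedyU_infinite hq hx) _)
    (hasSum_remainder (one_pos.trans hq).ne' (quasiGreedyU_hasSum hq hx) _)
    (quasiGreedyU_remainder_mem (one_pos.trans hq) hx n).2

end Lex

section Surjectivity

variable {q : ℝ} {a : ℕ → ℕ}

lemma apply_le_apply_zero_of_lexLe_shift (h : ∀ n, LexLe (fun i => a (n + 1 + i)) a) (n : ℕ) :
    a n ≤ a 0 := by
  cases n with
  | zero => exact le_rfl
  | succ n =>
    rcases h n with ⟨_ | k, hagree, hlt⟩ | heq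
    · exact hlt.le
    · exact (hagree 0 k.succ_pos).le
    · exact (congrFun heq 0).le

lemma summable_div_pow_of_le (hq : 1 < q) {C : ℕ} (hbd : ∀ n, a n ≤ C) :
    Summable fun i => (a i : ℝ) / q ^ (i + 1) :=
  (hasSum_div_pow_succ hq C).summable.of_nonneg_of_le (fun i => by positivity) fun i => by
    gcongr
    exact_mod_cast hbd i

lemma continuousOn_tsum_div_pow {q₀ : ℝ} (hq₀ : 1 < q₀) {C : ℕ} (hbd : ∀ n, a n ≤ C) :
    ContinuousOn (fun p : ℝ => ∑' i, (a i : ℝ) / p ^ (i + 1)) (Set.Ici q₀) := by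
  have hpos : ∀ p ∈ Set.Ici q₀, 0 < p := fun p hp => one_pos.trans (hq₀.trans_le hp)
  refine continuousOn_tsum (fun i => continuousOn_const.div (continuousOn_pow _)
    fun p hp => (pow_pos (hpos p hp) _).ne') (hasSum_div_pow_succ hq₀ C).summable
    fun i p hp => ?_
  rw [Real.norm_of_nonneg (div_nonneg (Nat.cast_nonneg _) (pow_pos (hpos p hp) _).le)]
  have := one_pos.trans hq₀
  gcongr
  · exact_mod_cast hbd i
  · exact hp

lemma exists_hasSum_eq_one {C : ℕ} (hbd : ∀ n, a n ≤ C) (hinf : {n | a n ≠ 0}.Infinite) :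
    ∃ q, 1 < q ∧ HasSum (fun i => (a i : ℝ) / q ^ (i + 1)) 1 := by
  obtain ⟨j₁, hj₁⟩ := hinf.nonempty
  obtain ⟨j₂, hj₂, hj⟩ := hinf.exists_gt j₁
  -- in base `q₀ = 2 ^ (1 / (j₂ + 1))` the digits `a j₁`, `a j₂` each contribute at least `1/2`
  set q₀ : ℝ := 2 ^ ((j₂ + 1 : ℕ) : ℝ)⁻¹
  have hq₀ : 1 < q₀ := Real.one_lt_rpow one_lt_two (by positivity)
  have hq₀pow : q₀ ^ (j₂ + 1) = 2 := Real.rpow_inv_natCast_pow zero_le_two j₂.succ_ne_zero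
  have hhalf : ∀ j, a j ≠ 0 → j ≤ j₂ → 1 / 2 ≤ (a j : ℝ) / q₀ ^ (j + 1) := fun j hj hjj₂ =>
    calc (1 : ℝ) / 2 = 1 / q₀ ^ (j₂ + 1) := by rw [hq₀pow]
      _ ≤ 1 / q₀ ^ (j + 1) := by gcongr; exact hq₀.le
      _ ≤ (a j : ℝ) / q₀ ^ (j + 1) := by gcongr; exact_mod_cast Nat.one_le_iff_ne_zero.2 hj
  set f : ℝ → ℝ := fun p => ∑' i, (a i : ℝ) / p ^ (i + 1)
  have hf₀ : 1 ≤ f q₀ := by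
    have := Summable.sum_le_tsum {j₁, j₂} (fun i _ => by positivity)
      (summable_div_pow_of_le hq₀ hbd)
    rw [sum_pair hj.ne] at this
    linarith [hhalf j₁ hj₁ hj.le, hhalf j₂ hj₂ le_rfl]
  set q₁ : ℝ := q₀ + C
  have hC : (0 : ℝ) ≤ C := Nat.cast_nonneg C
  have hq₁ : 1 < q₁ := by linarith
  have hf₁ : f q₁ < 1 := by
    refine (hasSum_le (fun i => ?_) (summable_div_pow_of_le hq₁ hbd).hasSum
      (hasSum_div_pow_succ hq₁ C)).trans_lt ?_
    · gcongr
      exact_mod_cast hbd i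
    · rw [div_lt_one (by linarith)]
      linarith
  obtain ⟨q, hq, hfq⟩ := intermediate_value_Icc' (by simp [q₁] : q₀ ≤ q₁)
    ((continuousOn_tsum_div_pow hq₀ hbd).mono Set.Icc_subset_Ici_self) ⟨hf₁.le, hf₀⟩
  exact ⟨q, hq₀.trans_le hq.1, hfq ▸ (summable_div_pow_of_le (hq₀.trans_le hq.1) hbd).hasSum⟩

lemma bddAbove_range_remainder (hq : 1 < q) {x : ℝ}
    (hsum : HasSum (fun i => (a i : ℝ) / q ^ (i + 1)) x) {C : ℕ} (hbd : ∀ n, a n ≤ C) :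
    BddAbove (Set.range (remainder q x a)) := by
  refine ⟨C / (q - 1), ?_⟩
  rintro _ ⟨m, rfl⟩
  refine hasSum_le (fun i => ?_) (hasSum_remainder (one_pos.trans hq).ne' hsum m)
    (hasSum_div_pow_succ hq C)
  gcongr
  exact_mod_cast hbd _

lemma remainder_le_one_add_sub_div (hq : 1 < q)
    (hsum : HasSum (fun i => (a i : ℝ) / q ^ (i + 1)) 1)
    (hshift : ∀ n, LexLe (fun i => a (n + 1 + i)) a) {V : ℝ} (hV1 : 1 ≤ V)
    (hV : ∀ m, remainder q 1 a m ≤ V) (m : ℕ) : remainder q 1 a m ≤ 1 + (V - 1) / q := by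
  have hq0 : 0 < q := one_pos.trans hq
  have hVq : 0 ≤ (V - 1) / q := div_nonneg (sub_nonneg.2 hV1) hq0.le
  cases m with
  | zero => rw [remainder_zero]; linarith
  | succ n =>
    rcases hshift n with ⟨k, hagree, hlt⟩ | heq
    · have hQ : 0 < q ^ (k + 1) := pow_pos hq0 _
      have htail := remainder_eq_sum_add (x := 1) (a := a) hq0.ne' (n + 1) (k + 1)
      have hhead := remainder_eq_sum_add (x := 1) (a := a) hq0.ne' 0 (k + 1)
      simp only [zero_add, remainder_zero] at hhead
      rw [sum_range_succ] at htail hhead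
      have hprefix : ∑ j ∈ range k, (a (n + 1 + j) : ℝ) / q ^ (j + 1) =
          ∑ j ∈ range k, (a j : ℝ) / q ^ (j + 1) :=
        sum_congr rfl fun j hj => by rw [show a (n + 1 + j) = a j from hagree j (mem_range.1 hj)]
      rw [hprefix] at htail
      have hdigit : (a (n + 1 + k) : ℝ) / q ^ (k + 1) ≤ (a k - 1) / q ^ (k + 1) := by
        gcongr
        exact le_sub_iff_add_le.2 (by exact_mod_cast hlt)
      have hrest : remainder q 1 a (n + 1 + (k + 1)) / q ^ (k + 1) ≤ V / q ^ (k + 1) := by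
        gcongr
        exact hV _
      have hnonneg : 0 ≤ remainder q 1 a (k + 1) / q ^ (k + 1) :=
        div_nonneg ((hasSum_remainder hq0.ne' hsum _).nonneg fun i => by positivity) hQ.le
      have hpow : (V - 1) / q ^ (k + 1) ≤ (V - 1) / q :=
        div_le_div_of_nonneg_left (sub_nonneg.2 hV1) hq0 (le_self_pow₀ hq.le k.succ_ne_zero)
      rw [sub_div] at hdigit hpow
      linarith
    · have htail : (fun i => (a (n + 1 + i) : ℝ) / q ^ (i + 1)) =
          fun i => (a i : ℝ) / q ^ (i + 1) :=
        funext fun i => by rw [show a (n + 1 + i) = a i from congrFun heq i]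
      have : remainder q 1 a (n + 1) = 1 :=
        (hasSum_remainder hq0.ne' hsum (n + 1)).unique (htail ▸ hsum)
      linarith

theorem exists_quasiGreedyU_one_eq (hinf : {n | a n ≠ 0}.Infinite)
    (hshift : ∀ n, LexLe (fun i => a (n + 1 + i)) a) : ∃ q, 1 < q ∧ quasiGreedyU q 1 = a := by
  have hbd := apply_le_apply_zero_of_lexLe_shift hshift
  obtain ⟨q, hq, hsum⟩ := exists_hasSum_eq_one hbd hinf
  refine ⟨q, hq, (quasiGreedyU_eq_iff (one_pos.trans hq) one_pos).2 fun n =>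
    ⟨remainder_pos (one_pos.trans hq) hsum hinf _, ?_⟩⟩
  exact le_one_of_le_one_add_sub_div hq (bddAbove_range_remainder hq hsum hbd)
    (fun V hV1 hV => remainder_le_one_add_sub_div hq hsum hshift hV1 hV) _

end Surjectivity

/-- Theorem 2.5 (a): `q ↦ (α_i)`, the quasi-greedy expansion of `1` in base `q` with
unbounded digits, is a strictly increasing one-to-one correspondence between `(1, ∞)`
and the set of infinite sequences of nonnegative integers satisfying
`α_{n+1}α_{n+2}… ≤ α_1α_2…` for all `n`. -/
theorem quasiGreedyU_one_bijection :
    (∀ q q' : ℝ, 1 < q → q < q' → LexLt (quasiGreedyU q 1) (quasiGreedyU q' 1)) ∧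
    Set.BijOn (fun q : ℝ => quasiGreedyU q 1) (Set.Ioi 1)
      {α : ℕ → ℕ | {n | α n ≠ 0}.Infinite ∧
        ∀ n, LexLe (fun i => α (n + 1 + i)) α} := by
  have hmono := quasiGreedyU_strictMonoOn (x := 1) one_pos
  refine ⟨fun q q' hq hqq' => hmono hq (hq.trans hqq') hqq', ?_, hmono.injOn.of_comp, ?_⟩
  · intro q (hq : 1 < q)
    exact ⟨quasiGreedyU_infinite hq one_pos, lexLe_quasiGreedyU_shift hq one_pos⟩
  · rintro a ⟨hinf, hshift⟩
    exact exists_quasiGreedyU_one_eq hinf hshift
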